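/- Consider a K-armed stochastic bandit where arm i yields i.i.d. rewards in [0,1] with mean μ_i, μ* = max_i μ_i and gaps δ_i = μ* − μ_i. The UCB1 policy (at each round play the arm maximizing empirical mean plus √(2 ln t / N_i(t))) has expected regret after n plays at most 8·∑_{i: μ_i < μ*} (ln n)/δ_i + (1 + π²/3)·∑_{j=1}^K δ_j. -/

import Mathlib

open MeasureTheory ProbabilityTheory

variable {Ω : Type*} [MeasurableSpace Ω]

/-- Number of times arm `i` has been played in the first `n` rounds by the
policy `I`. -/
def playCount {K : ℕ} (I : ℕ → Ω → Fin K) (n : ℕ) (i : Fin K) (ω : Ω) : ℕ :=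
  ((Finset.range n).filter (fun t => I t ω = i)).card

/-- Empirical mean reward of arm `i` before round `t`: the reward of the k-th
pull of arm `i` is `X i k`. -/
noncomputable def empMean {K : ℕ} (X : Fin K → ℕ → Ω → ℝ) (I : ℕ → Ω → Fin K)
    (i : Fin K) (t : ℕ) (ω : Ω) : ℝ :=
  (∑ k ∈ Finset.range (playCount I t i ω), X i k ω) / (playCount I t i ω)

/-- UCB1 index of arm `i` at round `t`: empirical mean plus √(2 ln t / Nᵢ(t)). -/
noncomputable def ucbIndex {K : ℕ} (X : Fin K → ℕ → Ω → ℝ) (I : ℕ → Ω → Fin K)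
    (i : Fin K) (t : ℕ) (ω : Ω) : ℝ :=
  empMean X I i t ω + Real.sqrt (2 * Real.log t / (playCount I t i ω))


/-!
Rewards are read from a fixed table: `X i k` is the reward of the `k`-th pull of arm `i`. The
empirical mean of an arm after `s` pulls is therefore the mean of a fixed independent sample,
and Hoeffding's inequality bounds its deviation for each `s` separately; a union bound over the
at most `t` possible values of `s` replaces any optional-stopping argument.

Let `δ = μ* - μᵢ > 0`. Once arm `i` has `ℓ ≥ 8 ln n / δ²` pulls, its confidence radius
`√(2 ln t / ℓ)` is at most `δ / 2`, so UCB1 can prefer it at round `t` to an optimal arm only if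
the optimal arm's empirical mean lies a radius below its mean or arm `i`'s lies a radius above.
Each of these `2t` events has probability at most `t⁻⁴`, so
`E[Nᵢ(n)] ≤ ℓ + ∑ₜ 2 / t² ≤ ℓ + π² / 3`, and the regret equals `∑ᵢ δᵢ E[Nᵢ(n)]`.
-/

open Real Finset

noncomputable def sampleMean (Y : ℕ → Ω → ℝ) (s : ℕ) (ω : Ω) : ℝ :=
  (∑ k ∈ range s, Y k ω) / s

section Hoeffding

variable {μ : Measure Ω} [IsProbabilityMeasure μ]

lemma hasSubgaussianMGF_sub_of_mem_Icc_zero_one {Y : Ω → ℝ} (hY : Measurable Y)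
    (hb : ∀ ω, Y ω ∈ Set.Icc (0 : ℝ) 1) {m : ℝ} (hm : μ[Y] = m) :
    HasSubgaussianMGF (fun ω ↦ Y ω - m) (1 / 4) μ := by
  have h := hasSubgaussianMGF_of_mem_Icc (μ := μ) hY.aemeasurable (.of_forall hb)
  rw [hm, show ‖(1 : ℝ) - 0‖₊ = 1 by simp] at h
  convert h using 1
  norm_num

lemma measureReal_mul_le_sum_range_le_of_hasSubgaussianMGF {Z : ℕ → Ω → ℝ}
    (hindep : iIndepFun Z μ) (hZ : ∀ k, HasSubgaussianMGF (Z k) (1 / 4) μ) (s : ℕ) {a : ℝ}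
    (ha : 0 ≤ a) :
    μ.real {ω | s * a ≤ ∑ k ∈ range s, Z k ω} ≤ exp (-2 * s * a ^ 2) := by
  refine (HasSubgaussianMGF.measure_sum_range_ge_le_of_iIndepFun hindep (fun k _ ↦ hZ k)
    (by positivity)).trans_eq ?_
  rcases s.eq_zero_or_pos with rfl | hs
  · simp
  · congr 1
    push_cast
    field_simp
    ring

variable {Y : ℕ → Ω → ℝ} {m : ℝ}

lemma measureReal_sampleMean_ge_le (hindep : iIndepFun Y μ) (hmeas : ∀ k, Measurable (Y k))
    (hb : ∀ k ω, Y k ω ∈ Set.Icc (0 : ℝ) 1) (hm : ∀ k, μ[Y k] = m) {s : ℕ} (hs : 0 < s)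
    {a : ℝ} (ha : 0 ≤ a) :
    μ.real {ω | m + a ≤ sampleMean Y s ω} ≤ exp (-2 * s * a ^ 2) := by
  have hindep' : iIndepFun (fun k ω ↦ Y k ω - m) μ :=
    hindep.comp (fun _ x ↦ x - m) (fun _ ↦ by fun_prop)
  convert measureReal_mul_le_sum_range_le_of_hasSubgaussianMGF hindep'
    (fun k ↦ hasSubgaussianMGF_sub_of_mem_Icc_zero_one (hmeas k) (hb k) (hm k)) s ha using 3
  ext ω
  simp only [sampleMean, sum_sub_distrib, sum_const, card_range, nsmul_eq_mul]
  rw [le_div_iff₀ (by exact_mod_cast hs)]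
  constructor <;> intro h <;> linarith

lemma measureReal_sampleMean_le_le (hindep : iIndepFun Y μ) (hmeas : ∀ k, Measurable (Y k))
    (hb : ∀ k ω, Y k ω ∈ Set.Icc (0 : ℝ) 1) (hm : ∀ k, μ[Y k] = m) {s : ℕ} (hs : 0 < s)
    {a : ℝ} (ha : 0 ≤ a) :
    μ.real {ω | sampleMean Y s ω ≤ m - a} ≤ exp (-2 * s * a ^ 2) := by
  have hindep' : iIndepFun (fun k ω ↦ -(Y k ω - m)) μ :=
    hindep.comp (fun _ x ↦ -(x - m)) (fun _ ↦ by fun_prop)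
  convert measureReal_mul_le_sum_range_le_of_hasSubgaussianMGF hindep'
    (fun k ↦ (hasSubgaussianMGF_sub_of_mem_Icc_zero_one (hmeas k) (hb k) (hm k)).neg) s ha
    using 3
  ext ω
  simp only [sampleMean, sum_neg_distrib, sum_sub_distrib, sum_const, card_range, nsmul_eq_mul]
  rw [div_le_iff₀ (by exact_mod_cast hs)]
  constructor <;> intro h <;> linarith

end Hoeffding

noncomputable def confRadius (t s : ℕ) : ℝ := √(2 * log t / s)

lemma confRadius_nonneg (t s : ℕ) : 0 ≤ confRadius t s := sqrt_nonneg _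

lemma two_mul_confRadius_le {t s : ℕ} {δ : ℝ} (hδ : 0 < δ) (hs : 8 * log t / δ ^ 2 ≤ s) :
    2 * confRadius t s ≤ δ := by
  have hlog : 0 ≤ log t := log_natCast_nonneg t
  have h : 2 * log t / s ≤ (δ / 2) ^ 2 := by
    rcases (Nat.zero_le s).eq_or_lt with rfl | hs0
    · simp only [CharP.cast_eq_zero, div_zero]
      positivity
    rw [div_le_iff₀ (by positivity)] at hs
    rw [div_le_iff₀ (by exact_mod_cast hs0)]
    nlinarith
  have := sqrt_le_sqrt h
  rw [sqrt_sq (by positivity)] at this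
  unfold confRadius
  linarith

lemma exp_neg_two_mul_sq_confRadius {t s : ℕ} (ht : 0 < t) (hs : 0 < s) :
    exp (-2 * s * confRadius t s ^ 2) = 1 / (t : ℝ) ^ 4 := by
  have hs' : (0 : ℝ) < s := by exact_mod_cast hs
  have ht' : (0 : ℝ) < t := by exact_mod_cast ht
  rw [confRadius, sq_sqrt (by positivity), one_div, ← exp_log (by positivity : (0 : ℝ) < t ^ 4),
    ← exp_neg, log_pow]
  congr 1
  field_simp
  push_cast
  ring

lemma sum_range_two_div_sq_le (n : ℕ) : ∑ t ∈ range n, 2 / (t : ℝ) ^ 2 ≤ π ^ 2 / 3 := by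
  have h := hasSum_zeta_two.summable.sum_le_tsum (range n) (fun t _ ↦ by positivity)
  rw [hasSum_zeta_two.tsum_eq] at h
  simp_rw [← mul_one_div (2 : ℝ), ← mul_sum]
  linarith

section PlayCount

variable {K : ℕ} {I : ℕ → Ω → Fin K}

lemma playCount_le (t : ℕ) (i : Fin K) (ω : Ω) : playCount I t i ω ≤ t :=
  (card_filter_le _ _).trans_eq (card_range t)

lemma playCount_succ (t : ℕ) (i : Fin K) (ω : Ω) :
    playCount I (t + 1) i ω = playCount I t i ω + if I t ω = i then 1 else 0 := by
  unfold playCount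
  rw [range_add_one, filter_insert]
  split_ifs
  · exact card_insert_of_notMem (by simp)
  · rfl

lemma sum_playCount (n : ℕ) (ω : Ω) : ∑ i, playCount I n i ω = n := by
  classical
  simpa [playCount] using (card_eq_sum_card_fiberwise (f := fun t ↦ I t ω) (s := range n)
    (t := univ) (fun _ _ ↦ mem_univ _)).symm

lemma measurable_playCount (hImeas : ∀ t, Measurable (I t)) (t : ℕ) (i : Fin K) :
    Measurable (playCount I t i) := by
  have : playCount I t i = fun ω ↦ ∑ s ∈ range t, if I s ω = i then 1 else 0 := by
    funext ω
    exact card_filter _ _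
  rw [this]
  exact Finset.measurable_sum _ fun s _ ↦
    Measurable.ite (hImeas s (measurableSet_singleton i)) measurable_const measurable_const

-- Pulls of `i` made while it had fewer than `ℓ` earlier pulls number at most `ℓ`.
lemma playCount_le_add_card (ℓ n : ℕ) (i : Fin K) (ω : Ω) :
    playCount I n i ω ≤ ℓ + #{t ∈ range n | I t ω = i ∧ ℓ ≤ playCount I t i ω} := by
  induction n with
  | zero => simp [playCount]
  | succ n ih =>
    have hn : n ∉ {t ∈ range n | I t ω = i ∧ ℓ ≤ playCount I t i ω} := by simp
    rw [playCount_succ, range_add_one, filter_insert]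
    split_ifs <;> (try rw [card_insert_of_notMem hn]) <;> omega

lemma playCount_eq_zero_of_lt_of_init
    (hInit : ∀ (ω : Ω) (t : ℕ) (ht : t < K), I t ω = ⟨t, ht⟩) {t : ℕ} (ht : t < K) {ω : Ω} :
    playCount I t (I t ω) ω = 0 := by
  refine card_eq_zero.2 (filter_eq_empty_iff.2 fun s hs hst ↦ ?_)
  have hs : s < t := mem_range.1 hs
  rw [hInit ω s (hs.trans ht), hInit ω t ht, Fin.mk.injEq] at hst
  omega

lemma one_le_playCount_of_init (hInit : ∀ (ω : Ω) (t : ℕ) (ht : t < K), I t ω = ⟨t, ht⟩)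
    {t : ℕ} (ht : K ≤ t) (i : Fin K) (ω : Ω) : 1 ≤ playCount I t i ω :=
  card_pos.2 ⟨i, mem_filter.2 ⟨mem_range.2 (i.isLt.trans_le ht), hInit ω i i.isLt⟩⟩

end PlayCount

section Bandit

variable {Pm : Measure Ω} {K : ℕ} {X : Fin K → ℕ → Ω → ℝ} {μv : Fin K → ℝ}
  {I : ℕ → Ω → Fin K}

structure IsRewardTable (Pm : Measure Ω) (X : Fin K → ℕ → Ω → ℝ) (μv : Fin K → ℝ) : Prop where
  measurable : ∀ i k, Measurable (X i k)
  mem_Icc : ∀ i k ω, X i k ω ∈ Set.Icc (0 : ℝ) 1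
  integral_eq : ∀ i k, ∫ ω, X i k ω ∂Pm = μv i
  iIndepFun : iIndepFun (fun p : Fin K × ℕ => X p.1 p.2) Pm

structure IsUCB1 (X : Fin K → ℕ → Ω → ℝ) (I : ℕ → Ω → Fin K) : Prop where
  init : ∀ (ω : Ω) (t : ℕ) (ht : t < K), I t ω = ⟨t, ht⟩
  ucbIndex_le : ∀ (ω : Ω) (t : ℕ), K ≤ t → ∀ j : Fin K,
    ucbIndex X I j t ω ≤ ucbIndex X I (I t ω) t ω

lemma measureReal_sampleMean_le_sub_confRadius_le [IsProbabilityMeasure Pm]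
    (hX : IsRewardTable Pm X μv) (i : Fin K) {t s : ℕ} (ht : 0 < t) (hs : 0 < s) :
    Pm.real {ω | sampleMean (X i) s ω ≤ μv i - confRadius t s} ≤ 1 / (t : ℝ) ^ 4 :=
  (measureReal_sampleMean_le_le (hX.iIndepFun.precomp (Prod.mk_right_injective i))
    (hX.measurable i) (hX.mem_Icc i) (hX.integral_eq i) hs (confRadius_nonneg t s)).trans_eq
    (exp_neg_two_mul_sq_confRadius ht hs)

lemma measureReal_add_confRadius_le_sampleMean_le [IsProbabilityMeasure Pm]
    (hX : IsRewardTable Pm X μv) (i : Fin K) {t s : ℕ} (ht : 0 < t) (hs : 0 < s) :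
    Pm.real {ω | μv i + confRadius t s ≤ sampleMean (X i) s ω} ≤ 1 / (t : ℝ) ^ 4 :=
  (measureReal_sampleMean_ge_le (hX.iIndepFun.precomp (Prod.mk_right_injective i))
    (hX.measurable i) (hX.mem_Icc i) (hX.integral_eq i) hs (confRadius_nonneg t s)).trans_eq
    (exp_neg_two_mul_sq_confRadius ht hs)

lemma sampleMean_deviates_of_ucbIndex_le {i j : Fin K} {t : ℕ} {ω : Ω}
    (hucb : ucbIndex X I j t ω ≤ ucbIndex X I i t ω)
    (hgap : μv i + 2 * confRadius t (playCount I t i ω) ≤ μv j) :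
    sampleMean (X j) (playCount I t j ω) ω ≤ μv j - confRadius t (playCount I t j ω) ∨
      μv i + confRadius t (playCount I t i ω) ≤ sampleMean (X i) (playCount I t i ω) ω := by
  change sampleMean (X j) _ ω + confRadius t _ ≤ sampleMean (X i) _ ω + confRadius t _ at hucb
  by_contra! h
  linarith [h.1, h.2]

lemma ucb_pull_subset_deviations (hI : IsUCB1 X I) {i j : Fin K} (hij : μv i < μv j)
    {ℓ n t : ℕ} (hℓ : 8 * log n / (μv j - μv i) ^ 2 ≤ ℓ) (htK : K ≤ t) (htn : t ≤ n) :
    {ω | I t ω = i ∧ ℓ ≤ playCount I t i ω} ⊆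
      (⋃ s ∈ Icc 1 t, {ω | sampleMean (X j) s ω ≤ μv j - confRadius t s}) ∪
        ⋃ s ∈ Icc 1 t, {ω | μv i + confRadius t s ≤ sampleMean (X i) s ω} := by
  rintro ω ⟨rfl, hℓN⟩
  have ht : 0 < t := j.pos.trans_le htK
  have hmem : ∀ k, playCount I t k ω ∈ Icc 1 t := fun k ↦
    mem_Icc.2 ⟨one_le_playCount_of_init hI.init htK k ω, playCount_le t k ω⟩
  have hlog : log t ≤ log n := log_le_log (by exact_mod_cast ht) (by exact_mod_cast htn)
  have hgap : μv (I t ω) + 2 * confRadius t (playCount I t (I t ω) ω) ≤ μv j := by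
    have := two_mul_confRadius_le (t := t) (s := playCount I t (I t ω) ω) (sub_pos.2 hij) <|
      calc 8 * log t / (μv j - μv (I t ω)) ^ 2 ≤ 8 * log n / (μv j - μv (I t ω)) ^ 2 := by
            gcongr
        _ ≤ (playCount I t (I t ω) ω : ℝ) := hℓ.trans (by exact_mod_cast hℓN)
    linarith
  rcases sampleMean_deviates_of_ucbIndex_le (hI.ucbIndex_le ω t htK j) hgap with h | h
  · exact Or.inl (Set.mem_biUnion (hmem j) h)
  · exact Or.inr (Set.mem_biUnion (hmem _) h)

lemma measureReal_ucb_pull_le [IsProbabilityMeasure Pm] (hX : IsRewardTable Pm X μv)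
    (hI : IsUCB1 X I) {i j : Fin K} (hij : μv i < μv j) {ℓ n t : ℕ} (hℓ1 : 1 ≤ ℓ)
    (hℓ : 8 * log n / (μv j - μv i) ^ 2 ≤ ℓ) (htn : t ≤ n) :
    Pm.real {ω | I t ω = i ∧ ℓ ≤ playCount I t i ω} ≤ 2 / (t : ℝ) ^ 2 := by
  rcases lt_or_ge t K with htK | htK
  -- this case contains `t = 0`, where the bound is the junk value `2 / 0 = 0`
  · have hempty : {ω | I t ω = i ∧ ℓ ≤ playCount I t i ω} = ∅ := by
      refine Set.eq_empty_of_forall_notMem fun ω ⟨hIt, hℓN⟩ ↦ ?_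
      rw [← hIt, playCount_eq_zero_of_lt_of_init hI.init htK] at hℓN
      omega
    rw [hempty, measureReal_empty]
    positivity
  have ht : 0 < t := j.pos.trans_le htK
  calc Pm.real {ω | I t ω = i ∧ ℓ ≤ playCount I t i ω}
      ≤ Pm.real (⋃ s ∈ Icc 1 t, {ω | sampleMean (X j) s ω ≤ μv j - confRadius t s}) +
          Pm.real (⋃ s ∈ Icc 1 t, {ω | μv i + confRadius t s ≤ sampleMean (X i) s ω}) :=
        (measureReal_mono (ucb_pull_subset_deviations hI hij hℓ htK htn)).trans
          (measureReal_union_le _ _)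
    _ ≤ ∑ s ∈ Icc 1 t, Pm.real {ω | sampleMean (X j) s ω ≤ μv j - confRadius t s} +
          ∑ s ∈ Icc 1 t, Pm.real {ω | μv i + confRadius t s ≤ sampleMean (X i) s ω} :=
        add_le_add (measureReal_biUnion_finset_le _ _) (measureReal_biUnion_finset_le _ _)
    _ ≤ ∑ s ∈ Icc 1 t, 1 / (t : ℝ) ^ 4 + ∑ s ∈ Icc 1 t, 1 / (t : ℝ) ^ 4 := by
        gcongr with s hs s hs
        · exact measureReal_sampleMean_le_sub_confRadius_le hX j ht (mem_Icc.1 hs).1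
        · exact measureReal_add_confRadius_le_sampleMean_le hX i ht (mem_Icc.1 hs).1
    _ = 2 / (t : ℝ) ^ 3 := by
        simp only [sum_const, Nat.card_Icc, add_tsub_cancel_right, nsmul_eq_mul]
        field_simp
        ring
    _ ≤ 2 / (t : ℝ) ^ 2 := by
        gcongr
        · exact_mod_cast ht
        · norm_num

lemma integrable_playCount [IsFiniteMeasure Pm] (hImeas : ∀ t, Measurable (I t)) (n : ℕ)
    (i : Fin K) : Integrable (fun ω ↦ (playCount I n i ω : ℝ)) Pm :=
  .of_bound (measurable_from_top.comp (measurable_playCount hImeas n i)).aestronglyMeasurable n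
    (ae_of_all _ fun ω ↦ by simpa using playCount_le n i ω)

lemma integral_playCount_le_add_sum [IsProbabilityMeasure Pm] (hImeas : ∀ t, Measurable (I t))
    (ℓ n : ℕ) (i : Fin K) :
    ∫ ω, (playCount I n i ω : ℝ) ∂Pm ≤
      ℓ + ∑ t ∈ range n, Pm.real {ω | I t ω = i ∧ ℓ ≤ playCount I t i ω} := by
  set E : ℕ → Set Ω := fun t ↦ {ω | I t ω = i ∧ ℓ ≤ playCount I t i ω}
  have hE : ∀ t, MeasurableSet (E t) := fun t ↦
    (hImeas t (measurableSet_singleton i)).inter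
      (measurable_playCount hImeas t i measurableSet_Ici)
  have hEint : ∀ t ∈ range n, Integrable ((E t).indicator (1 : Ω → ℝ)) Pm := fun t _ ↦
    (integrable_const (1 : ℝ)).indicator (hE t)
  have hcount (ω : Ω) :
      (playCount I n i ω : ℝ) ≤ ℓ + ∑ t ∈ range n, (E t).indicator (1 : Ω → ℝ) ω := by
    simp only [Set.indicator_apply, Pi.one_apply, ← natCast_card_filter]
    exact_mod_cast playCount_le_add_card (I := I) ℓ n i ω
  calc ∫ ω, (playCount I n i ω : ℝ) ∂Pm
      ≤ ∫ ω, ((ℓ : ℝ) + ∑ t ∈ range n, (E t).indicator (1 : Ω → ℝ) ω) ∂Pm :=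
        integral_mono (integrable_playCount hImeas n i)
          ((integrable_const _).add (integrable_finsetSum _ hEint)) hcount
    _ = ℓ + ∑ t ∈ range n, Pm.real (E t) := by
        rw [integral_add (integrable_const _) (integrable_finsetSum _ hEint), integral_const,
          integral_finsetSum _ hEint]
        simp [integral_indicator_one (hE _)]

lemma integral_playCount_le_of_lt [IsProbabilityMeasure Pm] (hX : IsRewardTable Pm X μv)
    (hImeas : ∀ t, Measurable (I t)) (hI : IsUCB1 X I) {i j : Fin K} (hij : μv i < μv j)
    (n : ℕ) :
    ∫ ω, (playCount I n i ω : ℝ) ∂Pm ≤ 8 * log n / (μv j - μv i) ^ 2 + 1 + π ^ 2 / 3 := by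
  set x := 8 * log n / (μv j - μv i) ^ 2
  have hx : 0 ≤ x := by have := log_natCast_nonneg n; positivity
  set ℓ := max 1 ⌈x⌉₊
  have hxℓ : x ≤ ℓ := (Nat.le_ceil x).trans (by exact_mod_cast le_max_right _ _)
  have hℓx : (ℓ : ℝ) ≤ x + 1 := by
    rw [Nat.cast_max, Nat.cast_one]
    exact max_le (by linarith) (Nat.ceil_lt_add_one hx).le
  calc ∫ ω, (playCount I n i ω : ℝ) ∂Pm
      ≤ ℓ + ∑ t ∈ range n, Pm.real {ω | I t ω = i ∧ ℓ ≤ playCount I t i ω} :=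
        integral_playCount_le_add_sum hImeas ℓ n i
    _ ≤ (x + 1) + π ^ 2 / 3 := by
        refine add_le_add hℓx ((sum_le_sum fun t ht ↦ ?_).trans (sum_range_two_div_sq_le n))
        exact measureReal_ucb_pull_le hX hI hij (le_max_left _ _) hxℓ (mem_range.1 ht).le

lemma regret_eq_sum_gap_mul [IsProbabilityMeasure Pm] (hImeas : ∀ t, Measurable (I t)) (n : ℕ)
    (μstar : ℝ) :
    (n : ℝ) * μstar - ∑ i, μv i * ∫ ω, (playCount I n i ω : ℝ) ∂Pm =
      ∑ i, (μstar - μv i) * ∫ ω, (playCount I n i ω : ℝ) ∂Pm := by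
  have hn : ∑ i, ∫ ω, (playCount I n i ω : ℝ) ∂Pm = n := by
    rw [← integral_finsetSum _ fun i _ ↦ integrable_playCount hImeas n i]
    simp_rw [← Nat.cast_sum, sum_playCount]
    simp
  simp_rw [sub_mul, sum_sub_distrib, ← mul_sum, hn, mul_comm]

lemma gap_mul_integral_playCount_le [IsProbabilityMeasure Pm] (hX : IsRewardTable Pm X μv)
    (hImeas : ∀ t, Measurable (I t)) (hI : IsUCB1 X I) {j : Fin K} (hj : ∀ i, μv i ≤ μv j)
    (n : ℕ) (i : Fin K) :
    (μv j - μv i) * ∫ ω, (playCount I n i ω : ℝ) ∂Pm ≤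
      (if μv i < μv j then 8 * (log n / (μv j - μv i)) else 0) +
        (1 + π ^ 2 / 3) * (μv j - μv i) := by
  split_ifs with hij
  · have hδ : 0 < μv j - μv i := sub_pos.2 hij
    calc (μv j - μv i) * ∫ ω, (playCount I n i ω : ℝ) ∂Pm
        ≤ (μv j - μv i) * (8 * log n / (μv j - μv i) ^ 2 + 1 + π ^ 2 / 3) :=
          mul_le_mul_of_nonneg_left (integral_playCount_le_of_lt hX hImeas hI hij n) hδ.le
      _ = 8 * (log n / (μv j - μv i)) + (1 + π ^ 2 / 3) * (μv j - μv i) := by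
          field_simp
          ring
  · simp [le_antisymm (hj i) (not_lt.1 hij)]

end Bandit

theorem ucb1_regret_bound_general
    (Pm : Measure Ω) [IsProbabilityMeasure Pm]
    (K : ℕ) (n : ℕ)
    (X : Fin K → ℕ → Ω → ℝ)
    (hmeas : ∀ i k, Measurable (X i k))
    (hbound : ∀ i k ω, X i k ω ∈ Set.Icc (0 : ℝ) 1)
    (μv : Fin K → ℝ)
    (hmean : ∀ i k, ∫ ω, X i k ω ∂Pm = μv i)
    (hindep : iIndepFun (fun p : Fin K × ℕ => X p.1 p.2) Pm)
    (I : ℕ → Ω → Fin K) (hImeas : ∀ t, Measurable (I t))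
    -- each arm is played once initially
    (hInit : ∀ (ω : Ω) (t : ℕ) (ht : t < K), I t ω = ⟨t, ht⟩)
    -- afterwards, UCB1 plays the arm maximizing the UCB index
    (hUCB : ∀ (ω : Ω) (t : ℕ), K ≤ t → ∀ j : Fin K,
      ucbIndex X I j t ω ≤ ucbIndex X I (I t ω) t ω)
    (μstar : ℝ) (hstar : IsGreatest (Set.range μv) μstar) :
    (n : ℝ) * μstar - ∑ i, μv i * ∫ ω, (playCount I n i ω : ℝ) ∂Pm ≤
      8 * ∑ i ∈ Finset.univ.filter (fun i => μv i < μstar),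
            Real.log n / (μstar - μv i)
        + (1 + Real.pi ^ 2 / 3) * ∑ j, (μstar - μv j) := by
  obtain ⟨istar, rfl⟩ := hstar.1
  have hX : IsRewardTable Pm X μv := ⟨hmeas, hbound, hmean, hindep⟩
  have hI : IsUCB1 X I := ⟨hInit, hUCB⟩
  rw [regret_eq_sum_gap_mul hImeas]
  refine (sum_le_sum fun i _ ↦ gap_mul_integral_playCount_le hX hImeas hI
    (fun i ↦ hstar.2 ⟨i, rfl⟩) n i).trans_eq ?_
  rw [sum_add_distrib, ← sum_filter, mul_sum, mul_sum]

/-- UCB1 regret bound (Auer et al. 2002): in a K-armed stochastic bandit with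
i.i.d. rewards in [0,1], means μᵢ, optimum μ* and gaps δᵢ = μ* − μᵢ, the UCB1
policy has expected regret after n plays at most
8·∑_{i : μᵢ < μ*} (ln n)/δᵢ + (1 + π²/3)·∑ⱼ δⱼ. -/
theorem ucb1_regret_bound
    (Pm : Measure Ω) [IsProbabilityMeasure Pm]
    (K : ℕ) (hK : 0 < K) (n : ℕ)
    (X : Fin K → ℕ → Ω → ℝ)
    (hmeas : ∀ i k, Measurable (X i k))
    (hbound : ∀ i k ω, X i k ω ∈ Set.Icc (0 : ℝ) 1)
    (μv : Fin K → ℝ)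
    (hmean : ∀ i k, ∫ ω, X i k ω ∂Pm = μv i)
    (hiid : ∀ i k l, IdentDistrib (X i k) (X i l) Pm Pm)
    (hindep : iIndepFun (fun p : Fin K × ℕ => X p.1 p.2) Pm)
    (I : ℕ → Ω → Fin K) (hImeas : ∀ t, Measurable (I t))
    -- each arm is played once initially
    (hInit : ∀ (ω : Ω) (t : ℕ) (ht : t < K), I t ω = ⟨t, ht⟩)
    -- afterwards, UCB1 plays the arm maximizing the UCB index
    (hUCB : ∀ (ω : Ω) (t : ℕ), K ≤ t → ∀ j : Fin K,
      ucbIndex X I j t ω ≤ ucbIndex X I (I t ω) t ω)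
    (μstar : ℝ) (hstar : IsGreatest (Set.range μv) μstar) :
    (n : ℝ) * μstar - ∑ i, μv i * ∫ ω, (playCount I n i ω : ℝ) ∂Pm ≤
      8 * ∑ i ∈ Finset.univ.filter (fun i => μv i < μstar),
            Real.log n / (μstar - μv i)
        + (1 + Real.pi ^ 2 / 3) * ∑ j, (μstar - μv j) :=
  ucb1_regret_bound_general Pm K n X hmeas hbound μv hmean hindep I hImeas hInit hUCB μstar hstar
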